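/- arXiv:math/9908121 — 4 statements merged into one kernel-verified Lean document; each statement's English description precedes it below -/
import Mathlib

section
/- Let X be a complete metric space with a finite Borel measure μ, and let φ: [0,∞) → [0,∞) be a continuous strictly increasing function with φ(0)=0 and lim_{x→∞} φ(x) > μ(X). Call a point x ∈ X regular if μ(B(x,t)) < φ(t) for all t > 0, where B(x,t) is the closed ball. Then for any 0 < γ < 1/2 there exists a sequence of closed balls B_k = B(x_k, t_k) whose union contains all irregular points and such that ∑_{k≥1} φ(γ t_k) ≤ μ(X). -/
/-!
Choose for every irregular point `y` a radius `r y > 0` with `φ (r y) ≤ μ (B(y, r y))`. Since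
`φ T > μ X` these radii are bounded, so the Vitali covering lemma with enlargement factor
`γ⁻¹ > 2` yields a disjoint subfamily of the balls `B(y, r y)` whose `γ⁻¹`-enlargements cover
all irregular points. Each chosen ball has positive measure, so by finiteness of `μ` the subfamily
is countable, and by disjointness `∑ φ (γ · γ⁻¹ r_k) ≤ ∑ μ(B_k) ≤ μ X`.
-/

open MeasureTheory Metric Set

-- The sequence enumerates `a` without repetition, padded by `d`, so each `a i` is summed once.
theorem exists_nat_seq_tsum_eq {ι β : Type*} [Countable ι] (a : ι → β) (d : β) :
    ∃ e : ℕ → β, range a ⊆ range e ∧ range e ⊆ insert d (range a) ∧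
      ∀ {M : Type*} [AddCommMonoid M] [TopologicalSpace M] (F : β → M), F d = 0 →
        ∑' k, F (e k) = ∑' i, F (a i) := by
  classical
  obtain ⟨g, hg⟩ := exists_injective_nat ι
  have extend_off : ∀ k ∉ range g, Function.extend g a (fun _ ↦ d) k = d := fun k hk ↦
    Function.extend_apply' _ _ _ hk
  refine ⟨Function.extend g a (fun _ ↦ d), ?_, ?_, fun F hF ↦ ?_⟩
  · rintro _ ⟨i, rfl⟩
    exact ⟨g i, hg.extend_apply a _ i⟩
  · rintro _ ⟨k, rfl⟩
    by_cases hk : k ∈ range g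
    · obtain ⟨i, rfl⟩ := hk
      exact Or.inr ⟨i, (hg.extend_apply a _ i).symm⟩
    · exact Or.inl (extend_off k hk)
  · refine (Eq.trans ?_ (hg.tsum_eq fun k hk ↦ ?_)).symm
    · simp only [hg.extend_apply]
    · by_contra hkg
      exact hk (by simp only [extend_off k hkg, hF])

theorem Set.PairwiseDisjoint.countable_of_measure_pos {α ι : Type*} [MeasurableSpace α]
    {μ : Measure α} [SFinite μ] {u : Set ι} {s : ι → Set α} (hd : u.PairwiseDisjoint s)
    (hs : ∀ i ∈ u, MeasurableSet (s i)) (hpos : ∀ i ∈ u, 0 < μ (s i)) : u.Countable := by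
  have := Measure.countable_meas_pos_of_disjoint_iUnion (μ := μ) (As := fun i : u ↦ s i)
    (fun i ↦ hs i i.2) fun i j hij ↦ hd i.2 j.2 (Subtype.coe_ne_coe.2 hij)
  simp only [hpos _ (Subtype.prop _), ofPred_true, countable_univ_iff] at this
  exact countable_coe_iff.1 this

theorem exists_countable_disjoint_closedBall_covering {X : Type*} [MetricSpace X]
    [MeasurableSpace X] [OpensMeasurableSpace X] (μ : Measure X) [SFinite μ] (I : Set X)
    (r : X → ℝ) (R : ℝ) (hpos : ∀ y ∈ I, 0 < μ (closedBall y (r y))) (hR : ∀ y ∈ I, r y ≤ R)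
    {c : ℝ} (hc : 2 < c) :
    ∃ u ⊆ I, u.Countable ∧ u.PairwiseDisjoint (fun b ↦ closedBall b (r b)) ∧
      I ⊆ ⋃ b ∈ u, closedBall b (c * r b) := by
  have hne : ∀ y ∈ I, (closedBall y (r y)).Nonempty := fun y hy ↦
    nonempty_of_measure_ne_zero (hpos y hy).ne'
  obtain ⟨u, huI, hdisj, hcover⟩ := Vitali.exists_disjoint_subfamily_covering_enlargement
    (fun y ↦ closedBall y (r y)) I r (c - 1) (by linarith)
    (fun y hy ↦ nonempty_closedBall.1 (hne y hy)) R hR hne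
  refine ⟨u, huI, hdisj.countable_of_measure_pos (μ := μ) (fun _ _ ↦ measurableSet_closedBall)
    fun b hb ↦ hpos b (huI hb), hdisj, fun y hy ↦ ?_⟩
  obtain ⟨b, hbu, ⟨z, hzy, hzb⟩, hrb⟩ := hcover y hy
  refine mem_biUnion hbu (mem_closedBall.2 ?_)
  calc dist y b ≤ dist z y + dist z b := dist_triangle_left y b z
    _ ≤ r y + r b := add_le_add hzy hzb
    _ ≤ c * r b := by linarith

theorem lt_of_ofReal_le_measure {α : Type*} [MeasurableSpace α] {μ : Measure α} {φ : ℝ → ℝ}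
    (hφ : MonotoneOn φ (Ici 0)) {s T : ℝ} (hs : 0 ≤ s) (hT : 0 ≤ T)
    (hTμ : μ univ < ENNReal.ofReal (φ T)) {A : Set α} (hA : ENNReal.ofReal (φ s) ≤ μ A) :
    s < T := by
  by_contra! hTs
  exact (hTμ.trans_le ((ENNReal.ofReal_le_ofReal (hφ hT hs hTs)).trans hA)).not_ge
    (measure_mono (subset_univ A))

theorem gorin_lemma_general {X : Type*} [MetricSpace X] [Nonempty X]
    [MeasurableSpace X] [BorelSpace X] (μ : Measure X) [IsFiniteMeasure μ]
    (φ : ℝ → ℝ) (hφmono : StrictMonoOn φ (Ici 0))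
    (hφ0 : φ 0 = 0)
    (hφlim : ∃ T ≥ (0:ℝ), μ univ < ENNReal.ofReal (φ T))
    (γ : ℝ) (hγ0 : 0 < γ) (hγ : γ < 1 / 2) :
    ∃ (x : ℕ → X) (t : ℕ → ℝ), (∀ k, 0 ≤ t k) ∧
      ({y : X | ¬ ∀ s > (0:ℝ), μ (closedBall y s) < ENNReal.ofReal (φ s)} ⊆
        ⋃ k, closedBall (x k) (t k)) ∧
      ∑' k, ENNReal.ofReal (φ (γ * t k)) ≤ μ univ := by
  obtain ⟨T, hT0, hTμ⟩ := hφlim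
  set I := {y : X | ¬ ∀ s > (0:ℝ), μ (closedBall y s) < ENNReal.ofReal (φ s)}
  have h_irregular : ∀ y ∈ I, ∃ s > 0, ENNReal.ofReal (φ s) ≤ μ (closedBall y s) := by
    simp [I]
  choose! r hr0 hrμ using h_irregular
  have hrpos : ∀ y ∈ I, 0 < μ (closedBall y (r y)) := fun y hy ↦
    (ENNReal.ofReal_pos.2 (hφ0 ▸ hφmono self_mem_Ici (hr0 y hy).le (hr0 y hy))).trans_le
      (hrμ y hy)
  obtain ⟨u, huI, hu, hdisj, hcover⟩ := exists_countable_disjoint_closedBall_covering μ I r T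
    hrpos (fun y hy ↦ (lt_of_ofReal_le_measure hφmono.monotoneOn (hr0 y hy).le hT0 hTμ
      (hrμ y hy)).le) (c := γ⁻¹) (by rw [lt_inv_comm₀ two_pos hγ0]; linarith)
  have : Countable u := hu.to_subtype
  obtain ⟨e, hae, hea, htsum⟩ :=
    exists_nat_seq_tsum_eq (fun b : u ↦ ((b : X), γ⁻¹ * r b)) (Classical.arbitrary X, 0)
  refine ⟨fun k ↦ (e k).1, fun k ↦ (e k).2, fun k ↦ ?_, fun y hy ↦ ?_, ?_⟩
  · rcases hea (mem_range_self k) with hk | ⟨b, hb⟩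
    · simp [hk]
    · simp only [← hb]
      exact mul_nonneg (inv_nonneg.2 hγ0.le) (hr0 b (huI b.2)).le
  · obtain ⟨b, hbu, hyb⟩ := mem_iUnion₂.1 (hcover hy)
    obtain ⟨k, hk⟩ := hae (mem_range_self ⟨b, hbu⟩)
    exact mem_iUnion.2 ⟨k, by simpa only [hk] using hyb⟩
  · calc ∑' k, ENNReal.ofReal (φ (γ * (e k).2))
        = ∑' b : u, ENNReal.ofReal (φ (r b)) := by
          rw [htsum (fun p ↦ ENNReal.ofReal (φ (γ * p.2))) (by simp [hφ0])]
          simp only [mul_inv_cancel_left₀ hγ0.ne']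
      _ ≤ ∑' b : u, μ (closedBall b (r b)) := ENNReal.tsum_le_tsum fun b ↦ hrμ b (huI b.2)
      _ = μ (⋃ b ∈ u, closedBall b (r b)) :=
          (measure_biUnion hu hdisj fun _ _ ↦ measurableSet_closedBall).symm
      _ ≤ μ univ := measure_mono (subset_univ _)

/-- Gorin's covering lemma: for a majorant `φ` on a complete metric space with finite
Borel measure `μ`, and any `0 < γ < 1/2`, there is a sequence of closed balls covering
all irregular points with `∑ φ(γ t_k) ≤ μ(X)`. -/
theorem gorin_lemma {X : Type*} [MetricSpace X] [CompleteSpace X] [Nonempty X]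
    [MeasurableSpace X] [BorelSpace X] (μ : Measure X) [IsFiniteMeasure μ]
    (φ : ℝ → ℝ) (hφcont : ContinuousOn φ (Ici 0)) (hφmono : StrictMonoOn φ (Ici 0))
    (hφnonneg : ∀ x ≥ (0:ℝ), 0 ≤ φ x) (hφ0 : φ 0 = 0)
    (hφlim : ∃ T ≥ (0:ℝ), μ univ < ENNReal.ofReal (φ T))
    (γ : ℝ) (hγ0 : 0 < γ) (hγ : γ < 1 / 2) :
    ∃ (x : ℕ → X) (t : ℕ → ℝ), (∀ k, 0 ≤ t k) ∧
      ({y : X | ¬ ∀ s > (0:ℝ), μ (closedBall y s) < ENNReal.ofReal (φ s)} ⊆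
        ⋃ k, closedBall (x k) (t k)) ∧
      ∑' k, ENNReal.ofReal (φ (γ * t k)) ≤ μ univ :=
  gorin_lemma_general μ φ hφmono hφ0 hφlim γ hγ0 hγ
end

section
/- Let z ∈ C be a point, μ a finite Borel measure on C supported in the closed unit disk with μ(C) = k, and set u(z) = ∫ log|z−ξ| dμ(ξ). Fix N ≥ max{1,H} with H > 0, and let n(t;z) = μ({ξ : |z−ξ| ≤ t}). If n(t;z) < (pt)^d for all t > 0, where p = (kd)^{1/d}/H, then u(z) ≥ k log(H/e). -/
/-!
The function `log⁺ (H / ‖z - ξ‖)` exceeds `s > 0` only on the disk `‖z - ξ‖ ≤ H e^{-s}`, whose mass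
is less than `(p H e^{-s})^d = k d e^{-ds}`. By the layer cake formula its integral is therefore at
most `∫₀^∞ k d e^{-ds} ds = k`, and integrating `log ‖z - ξ‖ ≥ log H - log⁺ (H / ‖z - ξ‖)` against
the mass `k` gives `u(z) ≥ k log H - k`.
-/

open MeasureTheory Metric Set

theorem lintegral_ofReal_exp_neg_mul_Ioi {d : ℝ} (hd : 0 < d) :
    ∫⁻ s in Ioi (0 : ℝ), ENNReal.ofReal (Real.exp (-d * s)) = ENNReal.ofReal d⁻¹ := by
  rw [← ofReal_integral_eq_lintegral_ofReal (integrableOn_exp_mul_Ioi (neg_neg_of_pos hd) 0)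
    (Filter.Eventually.of_forall fun s => (Real.exp_pos _).le),
    integral_exp_mul_Ioi (neg_neg_of_pos hd), mul_zero, Real.exp_zero, neg_div_neg_eq, one_div]

theorem le_mul_exp_neg_of_le_log_sub_log {y H s : ℝ} (hH : 0 < H)
    (h : s ≤ Real.log H - Real.log y) : y ≤ H * Real.exp (-s) := by
  rcases le_or_gt y 0 with hy | hy
  · exact hy.trans (by positivity)
  · rw [← Real.log_le_log_iff hy (by positivity), Real.log_mul hH.ne' (Real.exp_ne_zero _),
      Real.log_exp]
    linarith

section

variable {α : Type*} [MeasurableSpace α] {μ : Measure α}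

/-- Since `ENNReal.ofReal` truncates at `0`, the integrand is `log⁺ (H / r x)` where `r x > 0`. -/
theorem lintegral_ofReal_log_sub_log_le {r : α → ℝ} (hr : AEMeasurable r μ) {p d H : ℝ}
    (hp : 0 ≤ p) (hd : 0 < d) (hH : 0 < H)
    (hcount : ∀ t > 0, μ {x | r x ≤ t} ≤ ENNReal.ofReal ((p * t) ^ d)) :
    ∫⁻ x, ENNReal.ofReal (Real.log H - Real.log (r x)) ∂μ ≤ ENNReal.ofReal ((p * H) ^ d / d) := by
  set φ : α → ℝ := fun x => max (Real.log H - Real.log (r x)) 0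
  have hφ : AEMeasurable φ μ :=
    (aemeasurable_const.sub (Real.measurable_log.comp_aemeasurable hr)).max aemeasurable_const
  have hlevel : ∀ s > 0, μ {x | s ≤ φ x} ≤ ENNReal.ofReal ((p * H) ^ d * Real.exp (-d * s)) := by
    intro s hs
    have hsub : {x | s ≤ φ x} ⊆ {x | r x ≤ H * Real.exp (-s)} := fun x hx =>
      le_mul_exp_neg_of_le_log_sub_log hH ((le_max_iff.mp hx).resolve_right hs.not_ge)
    have hpow : (p * (H * Real.exp (-s))) ^ d = (p * H) ^ d * Real.exp (-d * s) := by
      rw [← mul_assoc, Real.mul_rpow (by positivity) (Real.exp_pos _).le, ← Real.exp_mul, neg_mul,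
        mul_comm s d, neg_mul]
    exact (measure_mono hsub).trans (hpow ▸ hcount _ (by positivity))
  calc ∫⁻ x, ENNReal.ofReal (Real.log H - Real.log (r x)) ∂μ
      = ∫⁻ x, ENNReal.ofReal (φ x) ∂μ := by simp [φ]
    _ = ∫⁻ s in Ioi 0, μ {x | s ≤ φ x} :=
      lintegral_eq_lintegral_meas_le μ (Filter.Eventually.of_forall fun _ => le_max_right _ _) hφ
    _ ≤ ∫⁻ s in Ioi 0, ENNReal.ofReal ((p * H) ^ d) * ENNReal.ofReal (Real.exp (-d * s)) := by
      refine setLIntegral_mono' measurableSet_Ioi fun s hs => ?_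
      rw [← ENNReal.ofReal_mul (by positivity)]
      exact hlevel s hs
    _ = ENNReal.ofReal ((p * H) ^ d / d) := by
      rw [lintegral_const_mul _ (by fun_prop), lintegral_ofReal_exp_neg_mul_Ioi hd,
        ← ENNReal.ofReal_mul (by positivity), div_eq_mul_inv]

theorem sub_le_integral_of_lintegral_ofReal_sub_le [IsFiniteMeasure μ] {f : α → ℝ} {a b M : ℝ}
    (hf : AEStronglyMeasurable f μ) (hM : ∀ᵐ x ∂μ, f x ≤ M) (hb : 0 ≤ b)
    (h : ∫⁻ x, ENNReal.ofReal (a - f x) ∂μ ≤ ENNReal.ofReal b) :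
    μ.real univ * a - b ≤ ∫ x, f x ∂μ := by
  set φ : α → ℝ := fun x => max (a - f x) 0
  have hφ_nonneg : 0 ≤ᵐ[μ] φ := Filter.Eventually.of_forall fun _ => le_max_right _ _
  have hφ_meas : AEStronglyMeasurable φ μ :=
    (aestronglyMeasurable_const.sub hf).sup aestronglyMeasurable_const
  have hφ_lint : ∫⁻ x, ENNReal.ofReal (φ x) ∂μ ≤ ENNReal.ofReal b := by simpa [φ] using h
  have hφ_int : Integrable φ μ := (lintegral_ofReal_ne_top_iff_integrable hφ_meas hφ_nonneg).mp
    (hφ_lint.trans_lt ENNReal.ofReal_lt_top).ne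
  have hφ_le : ∫ x, φ x ∂μ ≤ b := by
    rw [integral_eq_lintegral_of_nonneg_ae hφ_nonneg hφ_meas]
    exact ENNReal.toReal_le_of_le_ofReal hb hφ_lint
  have hf_ge : ∀ x, a - φ x ≤ f x := fun x => by linarith [le_max_left (a - f x) 0]
  have hf_int : Integrable f μ := integrable_of_le_of_le hf (Filter.Eventually.of_forall hf_ge) hM
    ((integrable_const a).sub hφ_int) (integrable_const M)
  calc μ.real univ * a - b ≤ ∫ x, (a - φ x) ∂μ := by
        rw [integral_sub (integrable_const a) hφ_int, integral_const, smul_eq_mul]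
        linarith
    _ ≤ ∫ x, f x ∂μ := integral_mono ((integrable_const a).sub hφ_int) hf_int hf_ge

end

/-- Potential lower bound at a regular point: if the counting function satisfies
`n(t;z) < (pt)^d` with `p = (kd)^{1/d}/H`, then `u(z) ≥ k log(H/e)`. -/
theorem potential_lower_bound_at_regular_point
    (μ : Measure ℂ) [IsFiniteMeasure μ] (k d H : ℝ) (hk : 0 ≤ k) (hd : 0 < d)
    (hH : 0 < H) (hμk : μ univ = ENNReal.ofReal k)
    (hsupp : μ (closedBall 0 1)ᶜ = 0) (z : ℂ)
    (hcount : ∀ t > (0:ℝ),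
      (μ {ξ : ℂ | ‖z - ξ‖ ≤ t}).toReal < ((k * d) ^ (1/d) / H * t) ^ d) :
    k * Real.log (H / Real.exp 1) ≤ ∫ ξ, Real.log ‖z - ξ‖ ∂μ := by
  set p := (k * d) ^ (1/d) / H
  have hpH : (p * H) ^ d / d = k := by
    rw [div_mul_cancel₀ _ hH.ne', ← Real.rpow_mul (by positivity), one_div_mul_cancel hd.ne',
      Real.rpow_one, mul_div_cancel_right₀ _ hd.ne']
  have hball : ∀ t > 0, μ {ξ | ‖z - ξ‖ ≤ t} ≤ ENNReal.ofReal ((p * t) ^ d) := fun t ht =>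
    (ENNReal.le_ofReal_iff_toReal_le (measure_ne_top μ _) (by positivity)).mpr (hcount t ht).le
  have hlint := lintegral_ofReal_log_sub_log_le (r := fun ξ => ‖z - ξ‖) (by fun_prop)
    (by positivity) hd hH hball
  have hbdd : ∀ᵐ ξ ∂μ, Real.log ‖z - ξ‖ ≤ ‖z‖ + 1 := by
    filter_upwards [measure_eq_zero_iff_ae_notMem.mp hsupp] with ξ hξ
    have hξ1 : ‖ξ‖ ≤ 1 := by simpa using hξ
    linarith [Real.log_le_self (norm_nonneg (z - ξ)), norm_sub_le z ξ]
  have hmass : μ.real univ = k := by rw [measureReal_def, hμk, ENNReal.toReal_ofReal hk]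
  calc k * Real.log (H / Real.exp 1) = μ.real univ * Real.log H - k := by
        rw [hmass, Real.log_div hH.ne' (Real.exp_ne_zero 1), Real.log_exp]; ring
    _ ≤ ∫ ξ, Real.log ‖z - ξ‖ ∂μ :=
        sub_le_integral_of_lintegral_ofReal_sub_le (f := fun ξ => Real.log ‖z - ξ‖)
          (Real.measurable_log.comp (by fun_prop)).aestronglyMeasurable hbdd hk (hpH ▸ hlint)
end

section
/- Let K ⊂ D_{1/2} ⊂ C be compact with H^d(K) < ∞. Suppose there exist constants L and C > 0 such that for every x ∈ K, every t with D(x,t) ⊂ D(x,3t/2) ⊂ D_{2/3}, every compact ω ⊂ K ∩ D(x,t) with H^d(ω) = ε, and every f subharmonic in D_1 with sup_{D_1} f ≤ 3/2 and sup_{D_{2/3}} f ≥ 1/6, one has sup_{D(x,t)} f ≤ sup_ω f + L + C log( t / ε^{1/d} ). Then K is d-regular: K ∈ A(d,c) for some c > 0, i.e., H^d(K ∩ D(x,t)) ≤ c t^d for all x ∈ K and 0 < t ≤ diam K. -/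
open MeasureTheory Metric Set Complex

def SubharmonicOn (f : ℂ → ℝ) (U : Set ℂ) : Prop :=
  UpperSemicontinuousOn f U ∧
  ∀ x : ℂ, ∀ ρ : ℝ, 0 < ρ → closedBall x ρ ⊆ U →
    f x ≤ (2 * Real.pi)⁻¹ *
      ∫ θ in (0:ℝ)..(2 * Real.pi), f (x + (ρ : ℂ) * Complex.exp (θ * Complex.I))

/-!
For the constant function `1` the inequality reads `0 ≤ L + C log (t / ε^(1/d))`, that is
`H^d(ω) ≤ (e^(L/C) t)^d` for every compact `ω ⊆ K ∩ D(x,t)`, as soon as `t ≤ 1/9` (which gives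
`D(x,3t/2) ⊆ D_{2/3}` for `x ∈ D_{1/2}`). Since `H^d` restricted to `K` is a finite Borel measure,
it is approximated from inside by closed sets, whose traces on `K` are compact, so the bound passes
to `K ∩ D(x,t)`; for `t > 1/9` the finiteness of
`H^d(K)` alone gives a bound of the form `c t^d`.
-/

lemma subharmonicOn_const (c : ℝ) (U : Set ℂ) : SubharmonicOn (fun _ => c) U := by
  refine ⟨upperSemicontinuousOn_const, fun x ρ _ _ => ?_⟩
  rw [intervalIntegral.integral_const, smul_eq_mul, sub_zero, ← mul_assoc,
    inv_mul_cancel₀ (by positivity), one_mul]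

lemma le_rpow_of_nonneg_add_mul_log {d ε t L C : ℝ} (hd : 0 < d) (hε : 0 < ε) (ht : 0 < t)
    (hC : 0 < C) (h : 0 ≤ L + C * Real.log (t / ε ^ (1 / d))) :
    ε ≤ Real.exp (L / C) ^ d * t ^ d := by
  rw [← Real.mul_rpow (Real.exp_pos _).le ht.le, ← Real.log_le_log_iff hε (by positivity),
    Real.log_rpow (by positivity), Real.log_mul (Real.exp_pos _).ne' ht.ne', Real.log_exp]
  rw [Real.log_div ht.ne' (Real.rpow_pos_of_pos hε _).ne', Real.log_rpow hε] at h
  have : 1 / d * Real.log ε ≤ L / C + Real.log t := by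
    rw [← sub_nonneg, show L / C + Real.log t - 1 / d * Real.log ε
      = (L + C * (Real.log t - 1 / d * Real.log ε)) / C by field_simp; ring]
    positivity
  rwa [div_mul_eq_mul_div, one_mul, div_le_iff₀' hd] at this

lemma measure_inter_le_of_forall_isCompact {X : Type*} [TopologicalSpace X]
    [TopologicalSpace.PseudoMetrizableSpace X] [MeasurableSpace X] [BorelSpace X]
    {μ : Measure X} {K s : Set X}
    (hK : IsCompact K) (hKμ : μ K ≠ ⊤) (hs : MeasurableSet s) {B : ENNReal}
    (hB : ∀ ω, IsCompact ω → ω ⊆ K ∩ s → μ ω ≤ B) : μ (K ∩ s) ≤ B := by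
  have : IsFiniteMeasure (μ.restrict K) := isFiniteMeasure_restrict.2 hKμ
  by_contra! hlt
  rw [inter_comm, ← Measure.restrict_apply hs] at hlt
  obtain ⟨F, hFs, hF, hBF⟩ := hs.exists_lt_isClosed_of_ne_top (measure_ne_top _ _) hlt
  rw [Measure.restrict_apply hF.measurableSet] at hBF
  exact (hB _ (hK.inter_left hF) fun z hz => ⟨hz.2, hFs hz.1⟩).not_gt hBF

lemma exists_forall_measure_inter_ball_le_of_small_scale {X : Type*} [PseudoMetricSpace X]
    [MeasurableSpace X] {μ : Measure X} {K : Set X} (hKμ : μ K ≠ ⊤) {d r₀ c₀ : ℝ} (hd : 0 ≤ d)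
    (hr₀ : 0 < r₀) (hc₀ : 0 < c₀)
    (hsmall : ∀ x ∈ K, ∀ t, 0 < t → t ≤ r₀ → μ (K ∩ ball x t) ≤ ENNReal.ofReal (c₀ * t ^ d)) :
    ∃ c : ℝ, 0 < c ∧ ∀ x ∈ K, ∀ t, 0 < t → μ (K ∩ ball x t) ≤ ENNReal.ofReal (c * t ^ d) := by
  set m := (μ K).toReal
  refine ⟨c₀ + m / r₀ ^ d, by positivity, fun x hx t ht => ?_⟩
  have htd : 0 ≤ t ^ d := by positivity
  rcases le_or_gt t r₀ with htr | hrt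
  · refine (hsmall x hx t ht htr).trans (ENNReal.ofReal_le_ofReal ?_)
    gcongr
    exact le_add_of_nonneg_right (by positivity)
  · calc μ (K ∩ ball x t) ≤ μ K := measure_mono inter_subset_left
      _ = ENNReal.ofReal (m / r₀ ^ d * r₀ ^ d) := by
        rw [div_mul_cancel₀ _ (by positivity), ENNReal.ofReal_toReal hKμ]
      _ ≤ ENNReal.ofReal ((c₀ + m / r₀ ^ d) * t ^ d) := by
        gcongr ENNReal.ofReal ?_
        calc m / r₀ ^ d * r₀ ^ d ≤ m / r₀ ^ d * t ^ d := by gcongr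
          _ ≤ _ := by gcongr; exact le_add_of_nonneg_left hc₀.le

/-- Proposition 3.3: the Cartan-type inequality forces Ahlfors `d`-regularity. -/
theorem regularity_necessary (K : Set ℂ) (d : ℝ) (hd : 0 < d) (hK : IsCompact K)
    (hK12 : K ⊆ ball (0:ℂ) (1/2)) (hKfin : μH[d] K < ⊤)
    (L C : ℝ) (hC : 0 < C)
    (hineq : ∀ x ∈ K, ∀ t > (0:ℝ), ball x (3 * t / 2) ⊆ ball (0:ℂ) (2/3) →
      ∀ (ω : Set ℂ) (ε : ℝ), IsCompact ω → ω ⊆ K ∩ ball x t → 0 < ε →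
        μH[d] ω = ENNReal.ofReal ε →
        ∀ f : ℂ → ℝ, SubharmonicOn f (ball 0 1) →
          (∀ z ∈ ball (0:ℂ) 1, f z ≤ 3/2) →
          ((1:ℝ)/6 ≤ sSup (f '' ball (0:ℂ) (2/3))) →
          sSup (f '' ball x t) ≤ sSup (f '' ω) + L + C * Real.log (t / ε ^ (1/d))) :
    ∃ c : ℝ, 0 < c ∧ ∀ x ∈ K, ∀ t : ℝ, 0 < t → t ≤ (EMetric.diam K).toReal →
      μH[d] (K ∩ ball x t) ≤ ENNReal.ofReal (c * t ^ d) := by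
  have hsmall : ∀ x ∈ K, ∀ t, 0 < t → t ≤ 1 / 9 →
      μH[d] (K ∩ ball x t) ≤ ENNReal.ofReal (Real.exp (L / C) ^ d * t ^ d) := by
    intro x hx t ht ht9
    have hball : ball x (3 * t / 2) ⊆ ball (0:ℂ) (2/3) :=
      ball_subset_ball' (by linarith [mem_ball.1 (hK12 hx)])
    refine measure_inter_le_of_forall_isCompact hK hKfin.ne measurableSet_ball fun ω hω hωK => ?_
    rcases eq_zero_or_pos (μH[d] ω) with h0 | hpos
    · simp [h0]
    have hfin : μH[d] ω ≠ ⊤ := ((measure_mono (hωK.trans inter_subset_left)).trans_lt hKfin).ne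
    have key := hineq x hx t ht hball ω _ hω hωK (ENNReal.toReal_pos hpos.ne' hfin)
      (ENNReal.ofReal_toReal hfin).symm (fun _ => 1) (subharmonicOn_const 1 _) (by norm_num)
      (by rw [(nonempty_ball.2 (by norm_num)).image_const, csSup_singleton]; norm_num)
    rw [(nonempty_ball.2 ht).image_const, (nonempty_of_measure_ne_zero hpos.ne').image_const,
      csSup_singleton] at key
    rw [← ENNReal.ofReal_toReal hfin]
    exact ENNReal.ofReal_le_ofReal (le_rpow_of_nonneg_add_mul_log hd
      (ENNReal.toReal_pos hpos.ne' hfin) ht hC (by linarith))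
  obtain ⟨c, hc, hbound⟩ := exists_forall_measure_inter_ball_le_of_small_scale hKfin.ne hd.le
    (by norm_num) (by positivity) hsmall
  exact ⟨c, hc, fun x hx t ht _ => hbound x hx t ht⟩
end

section
/- Let f be subharmonic on D_1 satisfying sup_{D_1} f ≤ M_1 and sup_{D_r} f ≥ M_2 (r < 1). Let K ⊂ D_r be compact in A(d,a), and let D(x,t) ⊂ D(x,t/r) ⊂ D_r. Set K_{x,t} = D(x,t) ∩ K, f_{x,t} = sup_{D(x,t)} f, f' = f_{x,t} − f, and let D_{f'}(λ) = H^d({y ∈ K_{x,t} : f'(y) ≥ λ}) be the distribution function of f'. Then, with c = c(r) > 0 from the Cartan-type estimate, D_{f'}(λ) ≤ ((4et)^d a / (r^d d)) · e^{−λ d/(c(M_1 − M_2))} for all λ ≥ 0. -/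
/-!
By inner regularity of `μH[d]` it suffices to bound `H^d(F)` for compact `F` inside the level
set. Such an `F` inherits the Ahlfors bound of `K` and `f ≤ f_{x,t} - λ` on `F`, so the
Cartan-type estimate reads `λ ≤ (M₁ - M₂) c log (4et a^{1/d} / (r (d H^d(F))^{1/d}))`; solving
for `H^d(F)` gives the exponential bound. When `M₁ = M₂` the claim is only the bound
`2a(2t)^d` for the mass of `K ∩ D(x,t)`, which the Ahlfors condition gives by covering `K`
with two discs of radius `diam K` about distinct points of `K`.
-/

open MeasureTheory Metric Set Complex

def AhlforsUpper (K : Set ℂ) (d a : ℝ) : Prop :=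
  ∀ y ∈ K, ∀ s : ℝ, 0 < s → s ≤ (EMetric.diam K).toReal →
    μH[d] (K ∩ ball y s) ≤ ENNReal.ofReal (a * s ^ d)

theorem Metric.finite_sphere_inter_sphere {V : Type*} [NormedAddCommGroup V]
    [InnerProductSpace ℝ V] [FiniteDimensional ℝ V] (hV : Module.finrank ℝ V = 2)
    {p q : V} (hpq : p ≠ q) (r s : ℝ) : (sphere p r ∩ sphere q s).Finite := by
  rcases (sphere p r ∩ sphere q s).subsingleton_or_nontrivial with h | ⟨u, hu, v, hv, huv⟩
  · exact h.finite
  · refine (Set.toFinite {u, v}).subset fun w hw => ?_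
    exact EuclideanGeometry.eq_of_dist_eq_of_dist_eq_of_finrank_eq_two hV hpq huv
      hu.1 hv.1 hw.1 hu.2 hv.2 hw.2

theorem UpperSemicontinuousOn.measurableSet_sep_le {α : Type*} [TopologicalSpace α]
    [MeasurableSpace α] [OpensMeasurableSpace α] {f : α → ℝ} {U A : Set α}
    (hf : UpperSemicontinuousOn f U) (hU : MeasurableSet U) (hA : MeasurableSet A) (hAU : A ⊆ U)
    (b : ℝ) : MeasurableSet {y ∈ A | f y ≤ b} := by
  have hUb : MeasurableSet (U ∩ f ⁻¹' Iic b) := by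
    rw [← Subtype.image_preimage_coe]
    exact hU.subtype_image ((upperSemicontinuousOn_iff_restrict.2 hf).measurable measurableSet_Iic)
  convert hA.inter hUb using 1
  ext y
  exact ⟨fun ⟨hy, hfy⟩ => ⟨hy, hAU hy, hfy⟩, fun ⟨hy, _, hfy⟩ => ⟨hy, hfy⟩⟩

theorem MeasureTheory.measure_le_ofReal_of_forall_isCompact {α : Type*} [TopologicalSpace α]
    [MeasurableSpace α] {μ : Measure α} [μ.InnerRegularCompactLTTop] {s : Set α}
    (hs : MeasurableSet s) (hμs : μ s ≠ ⊤) {b : ℝ} (hb : 0 ≤ b)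
    (h : ∀ F ⊆ s, IsCompact F → ∀ ε : ℝ, 0 < ε → ENNReal.ofReal ε ≤ μ F → ε ≤ b) :
    μ s ≤ ENNReal.ofReal b := by
  rw [hs.measure_eq_iSup_isCompact_of_ne_top hμs]
  refine iSup₂_le fun F hF => iSup_le fun hFc => ?_
  have hμF : μ F ≠ ⊤ := ne_top_of_le_ne_top hμs (measure_mono hF)
  rcases eq_or_ne (μ F) 0 with h0 | h0
  · simp [h0]
  rw [ENNReal.le_ofReal_iff_toReal_le hμF hb]
  exact h F hF hFc _ (ENNReal.toReal_pos h0 hμF) (ENNReal.ofReal_toReal hμF).le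

theorem two_mul_mul_rpow_le {a d r t : ℝ} (ha : 0 ≤ a) (hd : 0 < d) (hr0 : 0 < r) (hr : r ≤ 1)
    (ht : 0 ≤ t) :
    2 * (a * (2 * t) ^ d) ≤ (4 * Real.exp 1 * t) ^ d * a / (r ^ d * d) := by
  have hsplit : (4 * Real.exp 1 * t) ^ d = (2 * t) ^ d * (2 * Real.exp 1) ^ d := by
    rw [← Real.mul_rpow (by positivity) (by positivity)]; ring_nf
  have hexp : 2 * d ≤ (2 * Real.exp 1) ^ d :=
    calc 2 * d ≤ Real.exp 1 ^ d := by rw [Real.exp_one_rpow]; exact Real.two_mul_le_exp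
      _ ≤ (2 * Real.exp 1) ^ d := by gcongr; linarith [Real.exp_pos 1]
  have hrd : r ^ d ≤ 1 := Real.rpow_le_one hr0.le hr hd.le
  rw [le_div_iff₀ (by positivity), hsplit]
  calc 2 * (a * (2 * t) ^ d) * (r ^ d * d) ≤ a * (2 * t) ^ d * (2 * d) := by
        have : 0 ≤ a * (2 * t) ^ d * d := by positivity
        nlinarith
    _ ≤ a * (2 * t) ^ d * (2 * Real.exp 1) ^ d := by gcongr
    _ = (2 * t) ^ d * (2 * Real.exp 1) ^ d * a := by ring

theorem le_mul_exp_of_le_mul_log {A a r d k ε lam : ℝ} (hA : 0 < A) (ha : 0 < a) (hr : 0 < r)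
    (hd : 0 < d) (hk : 0 < k) (hε : 0 < ε)
    (h : lam ≤ k * Real.log (A * a ^ (1 / d) / (r * (d * ε) ^ (1 / d)))) :
    ε ≤ A ^ d * a / (r ^ d * d) * Real.exp (-lam * d / k) := by
  have hlog : Real.log (A * a ^ (1 / d) / (r * (d * ε) ^ (1 / d))) =
      Real.log A + Real.log a / d - Real.log r - Real.log (d * ε) / d := by
    rw [Real.log_div (by positivity) (by positivity), Real.log_mul hA.ne' (by positivity),
      Real.log_mul hr.ne' (by positivity), Real.log_rpow ha, Real.log_rpow (by positivity)]
    ring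
  have hkey : Real.log (d * ε) ≤
      Real.log A * d + Real.log a - Real.log r * d + -lam * d / k := by
    rw [hlog, ← div_le_iff₀' hk] at h
    have := mul_le_mul_of_nonneg_left h hd.le
    field_simp at this ⊢
    linarith
  have hexp := Real.exp_le_exp.2 hkey
  rw [Real.exp_log (by positivity), Real.exp_add, Real.exp_sub, Real.exp_add,
    Real.exp_log ha, ← Real.rpow_def_of_pos hA,
    ← Real.rpow_def_of_pos hr] at hexp
  rw [div_mul_eq_div_div, div_mul_eq_mul_div, le_div_iff₀ hd]
  linarith

namespace AhlforsUpper

variable {K : Set ℂ} {d a : ℝ}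

theorem mono (hreg : AhlforsUpper K d a) (hK : Bornology.IsBounded K) {ω : Set ℂ}
    (hω : ω ⊆ K) : AhlforsUpper ω d a := fun y hy s hs hsd =>
  (measure_mono (inter_subset_inter_left _ hω)).trans <| hreg y (hω hy) s hs <|
    hsd.trans (ENNReal.toReal_mono hK.ediam_ne_top (Metric.ediam_mono hω))

theorem hausdorffMeasure_le (hreg : AhlforsUpper K d a) (hK : Bornology.IsBounded K)
    (hd : 0 < d) : μH[d] K ≤ 2 * ENNReal.ofReal (a * diam K ^ d) := by
  have := Measure.nullSingletonClass_hausdorff ℂ hd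
  rcases K.subsingleton_or_nontrivial with hs | hnt
  · simp [hs.finite.measure_zero]
  obtain ⟨p, hp, q, hq, hpq⟩ := hnt
  set D := diam K
  have hD : 0 < D := diam_pos ⟨p, hp, q, hq, hpq⟩ hK
  -- A point of `K` outside both open balls lies on both circles, which meet in at most two points.
  have hcover : K ⊆ (K ∩ ball p D) ∪ (K ∩ ball q D) ∪ (sphere p D ∩ sphere q D) := by
    intro w hw
    rcases (dist_le_diam_of_mem hK hw hp).lt_or_eq with h₁ | h₁
    · exact Or.inl (Or.inl ⟨hw, h₁⟩)
    rcases (dist_le_diam_of_mem hK hw hq).lt_or_eq with h₂ | h₂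
    · exact Or.inl (Or.inr ⟨hw, h₂⟩)
    · exact Or.inr ⟨h₁, h₂⟩
  have hcircles : μH[d] (sphere p D ∩ sphere q D) = 0 :=
    (finite_sphere_inter_sphere Complex.finrank_real_complex hpq D D).measure_zero _
  calc μH[d] K
      ≤ μH[d] (K ∩ ball p D) + μH[d] (K ∩ ball q D) + μH[d] (sphere p D ∩ sphere q D) :=
        (measure_mono hcover).trans <|
          (measure_union_le _ _).trans (add_le_add_left (measure_union_le _ _) _)
    _ ≤ ENNReal.ofReal (a * D ^ d) + ENNReal.ofReal (a * D ^ d) + 0 := by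
        rw [hcircles]
        gcongr
        · exact hreg p hp D hD le_rfl
        · exact hreg q hq D hD le_rfl
    _ = 2 * ENNReal.ofReal (a * D ^ d) := by rw [add_zero, two_mul]

theorem hausdorffMeasure_inter_ball_le (hreg : AhlforsUpper K d a) (hK : Bornology.IsBounded K)
    (hd : 0 < d) (ha : 0 ≤ a) (x : ℂ) {t : ℝ} (ht : 0 < t) :
    μH[d] (K ∩ ball x t) ≤ ENNReal.ofReal (2 * (a * (2 * t) ^ d)) := by
  rw [ENNReal.ofReal_mul zero_le_two, ENNReal.ofReal_ofNat]
  rcases le_or_gt (2 * t) (diam K) with h | h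
  · rcases (K ∩ ball x t).eq_empty_or_nonempty with he | ⟨y, hyK, hyx⟩
    · simp [he]
    have hsub : ball x t ⊆ ball y (2 * t) :=
      ball_subset_ball' (by linarith [mem_ball'.1 hyx])
    calc μH[d] (K ∩ ball x t) ≤ μH[d] (K ∩ ball y (2 * t)) :=
          measure_mono (inter_subset_inter_right _ hsub)
      _ ≤ ENNReal.ofReal (a * (2 * t) ^ d) := hreg y hyK _ (by positivity) h
      _ ≤ 2 * ENNReal.ofReal (a * (2 * t) ^ d) := le_mul_of_one_le_left' one_le_two
  · calc μH[d] (K ∩ ball x t) ≤ μH[d] K := measure_mono inter_subset_left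
      _ ≤ 2 * ENNReal.ofReal (a * diam K ^ d) := hreg.hausdorffMeasure_le hK hd
      _ ≤ 2 * ENNReal.ofReal (a * (2 * t) ^ d) := by gcongr

end AhlforsUpper

/-- Lemma 3.4: exponential decay of the distribution function of `f' = f_{x,t} - f`
on `K_{x,t}`, where `c = c(r)` is the constant from the Cartan-type estimate. -/
theorem distribution_function_bound (r : ℝ) (hr0 : 0 < r) (hr : r < 1)
    (f : ℂ → ℝ) (M₁ M₂ : ℝ) (hf : SubharmonicOn f (ball 0 1))
    (hM₁ : ∀ z ∈ ball (0:ℂ) 1, f z ≤ M₁) (hM₂ : M₂ ≤ sSup (f '' ball (0:ℂ) r))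
    (d a : ℝ) (hd : 0 < d) (ha : 0 < a)
    (K : Set ℂ) (hK : IsCompact K) (hKr : K ⊆ ball (0:ℂ) r)
    (hreg : AhlforsUpper K d a) (c : ℝ) (hc : 0 < c)
    (hcartan : ∀ (x : ℂ) (t : ℝ) (ω : Set ℂ) (ε : ℝ), 0 < t → 0 < ε →
      IsCompact ω → ω ⊆ ball x t → AhlforsUpper ω d a →
      ENNReal.ofReal ε ≤ μH[d] ω → ball x (t / r) ⊆ ball (0:ℂ) r →
      sSup (f '' ball x t) ≤ sSup (f '' ω) +
        (M₁ - M₂) * c *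
          Real.log (4 * Real.exp 1 * t * a ^ (1/d) / (r * (d * ε) ^ (1/d)))) :
    ∀ (x : ℂ) (t : ℝ), 0 < t → ball x (t / r) ⊆ ball (0:ℂ) r →
      ∀ lam : ℝ, 0 ≤ lam →
        μH[d] {y ∈ ball x t ∩ K | lam ≤ sSup (f '' ball x t) - f y} ≤
          ENNReal.ofReal ((4 * Real.exp 1 * t) ^ d * a / (r ^ d * d) *
            Real.exp (-lam * d / (c * (M₁ - M₂)))) := by
  intro x t ht hball lam _
  set S := sSup (f '' ball x t)
  have hKb : Bornology.IsBounded K := hK.isBounded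
  have hM : M₂ ≤ M₁ := hM₂.trans <| csSup_le ((nonempty_ball.2 hr0).image f) <|
    forall_mem_image.2 fun z hz => hM₁ z (ball_subset_ball hr.le hz)
  rcases hM.eq_or_lt with rfl | hM
  · -- The exponent then divides by zero, so the bound to prove is the prefactor alone.
    rw [sub_self, mul_zero, div_zero, Real.exp_zero, mul_one]
    exact (measure_mono ((sep_subset _ _).trans (inter_comm _ _).subset)).trans <|
      (hreg.hausdorffMeasure_inter_ball_le hKb hd ha.le x ht).trans <|
        ENNReal.ofReal_le_ofReal (two_mul_mul_rpow_le ha.le hd hr0 hr.le ht.le)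
  have hmeas : MeasurableSet {y ∈ ball x t ∩ K | lam ≤ S - f y} := by
    simp only [le_sub_comm (a := lam)]
    exact hf.1.measurableSet_sep_le isOpen_ball.measurableSet
      (isOpen_ball.measurableSet.inter hK.measurableSet)
      (fun y hy => ball_subset_ball hr.le (hKr hy.2)) _
  have hfin : μH[d] {y ∈ ball x t ∩ K | lam ≤ S - f y} ≠ ⊤ :=
    ne_top_of_le_ne_top (by finiteness) <| (measure_mono
      ((sep_subset _ _).trans inter_subset_right)).trans (hreg.hausdorffMeasure_le hKb hd)
  refine measure_le_ofReal_of_forall_isCompact hmeas hfin (by positivity)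
    fun F hF hFc ε hε hεF => ?_
  have hFne : F.Nonempty :=
    nonempty_of_measure_ne_zero ((ENNReal.ofReal_pos.2 hε).trans_le hεF).ne'
  have hsupF : sSup (f '' F) ≤ S - lam :=
    csSup_le (hFne.image f) (forall_mem_image.2 fun y hy => by linarith [(hF hy).2])
  have hcart := hcartan x t F ε ht hε hFc (fun y hy => (hF hy).1.1)
    (hreg.mono hKb fun y hy => (hF hy).1.2) hεF hball
  have hε_le := le_mul_exp_of_le_mul_log (A := 4 * Real.exp 1 * t) (by positivity) ha hr0 hd
    (by positivity) hε (by linarith : lam ≤ (M₁ - M₂) * c * _)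
  rwa [mul_comm (M₁ - M₂)] at hε_le
end
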